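/- Almost independence (Corollary 3): Let X be a finite alphabet, n ∈ ℕ, P an n-type on X, 1 ≤ i ≤ n−1, δ ≥ 0, and let X^n be uniformly distributed on T_n(P). Let x^i ∈ X^i be a prefix of positive probability under the law of (X_1,…,X_i), and let Q* be its associated suffix type, Q*(a) = (n·P(a) − i·P̂_{x^i}(a))/(n−i). If |Q*(a) − P(a)| ≤ δ·P(a) for all a ∈ X, then |P{X_{i+1} = a | (X_1,…,X_i) = x^i} − P(a)| ≤ δ·P(a) for all a ∈ X. -/

import Mathlib

open scoped BigOperators Classical

noncomputable section

/-- A probability mass function on a finite alphabet. -/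
def IsPMF {X : Type*} [Fintype X] (p : X → ℝ) : Prop :=
  (∀ a, 0 ≤ p a) ∧ ∑ a, p a = 1

/-- A (discrete memoryless) channel from `X` to `Y`: every row is a pmf. -/
def IsChannel {X Y : Type*} [Fintype X] [Fintype Y] (W : X → Y → ℝ) : Prop :=
  ∀ x, IsPMF (W x)

/-- Empirical distribution (type) of a sequence `x : Fin n → X`. -/
def empDist {X : Type*} [Fintype X] {n : ℕ} (x : Fin n → X) (a : X) : ℝ :=
  ((Finset.univ.filter fun t => x t = a).card : ℝ) / n

/-- `P` is an `n`-type on `X`: a pmf all of whose masses are multiples of `1/n`. -/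
def IsNType {X : Type*} [Fintype X] (n : ℕ) (P : X → ℝ) : Prop :=
  IsPMF P ∧ ∀ a, ∃ k : ℕ, (n : ℝ) * P a = k

/-- The type class `T_n(P)`: all sequences with empirical distribution `P`. -/
def typeClass {X : Type*} [Fintype X] (n : ℕ) (P : X → ℝ) : Finset (Fin n → X) :=
  Finset.univ.filter fun x => empDist x = P

/-- Shannon entropy (natural logarithm). -/
def shEntropy {X : Type*} [Fintype X] (p : X → ℝ) : ℝ :=
  ∑ a, Real.negMulLog (p a)

/-- Kullback–Leibler divergence (real-valued, with the usual `log` conventions). -/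
def dKL {X : Type*} [Fintype X] (q p : X → ℝ) : ℝ :=
  ∑ a, q a * Real.log (q a / p a)

/-- Conditional KL divergence `D(V‖W|P)`. -/
def condDKL {X Y : Type*} [Fintype X] [Fintype Y] (V W : X → Y → ℝ) (P : X → ℝ) : ℝ :=
  ∑ x, P x * dKL (V x) (W x)

def margFst {X Y : Type*} [Fintype X] [Fintype Y] (Q : X × Y → ℝ) (x : X) : ℝ :=
  ∑ y, Q (x, y)

def margSnd {X Y : Type*} [Fintype X] [Fintype Y] (Q : X × Y → ℝ) (y : Y) : ℝ :=
  ∑ x, Q (x, y)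

/-- Mutual information of a joint pmf (natural logarithm). -/
def mutualInfo {X Y : Type*} [Fintype X] [Fintype Y] (Q : X × Y → ℝ) : ℝ :=
  ∑ x, ∑ y, Q (x, y) * Real.log (Q (x, y) / (margFst Q x * margSnd Q y))

/-- Mutual information `I(P, V)` of the joint pmf `P(x)·V(y|x)`. -/
def miPV {X Y : Type*} [Fintype X] [Fintype Y] (P : X → ℝ) (V : X → Y → ℝ) : ℝ :=
  mutualInfo fun p => P p.1 * V p.1 p.2

/-- Positive part `|a|⁺ = max (a, 0)`. -/
def plusPart (a : ℝ) : ℝ := max a 0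

def margXY {X Y U : Type*} [Fintype X] [Fintype Y] [Fintype U] (Q : X × Y × U → ℝ) :
    X × Y → ℝ := fun p => ∑ u, Q (p.1, p.2, u)

def margYU {X Y U : Type*} [Fintype X] [Fintype Y] [Fintype U] (Q : X × Y × U → ℝ) :
    Y × U → ℝ := fun p => ∑ x, Q (x, p.1, p.2)

def margXU {X Y U : Type*} [Fintype X] [Fintype Y] [Fintype U] (Q : X × Y × U → ℝ) :
    X × U → ℝ := fun p => ∑ y, Q (p.1, y, p.2)

def margX3 {X Y U : Type*} [Fintype X] [Fintype Y] [Fintype U] (Q : X × Y × U → ℝ)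
    (x : X) : ℝ := ∑ y, ∑ u, Q (x, y, u)

def margY3 {X Y U : Type*} [Fintype X] [Fintype Y] [Fintype U] (Q : X × Y × U → ℝ)
    (y : Y) : ℝ := ∑ x, ∑ u, Q (x, y, u)

/-- Conditional mutual information `I_Q(X;U|Y)` of a joint pmf `Q` on `X × Y × U`. -/
def condMI3 {X Y U : Type*} [Fintype X] [Fintype Y] [Fintype U] (Q : X × Y × U → ℝ) : ℝ :=
  ∑ x, ∑ y, ∑ u, Q (x, y, u) *
    Real.log (Q (x, y, u) * margY3 Q y / (margXY Q (x, y) * margYU Q (y, u)))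

/-- `D(Q_{Y|X} ‖ W | P)` written via the joint pmf `Q_{XY}` (whose `X`-marginal is `P`). -/
def condDKLJoint {X Y : Type*} [Fintype X] [Fintype Y] (QXY : X × Y → ℝ)
    (W : X → Y → ℝ) (P : X → ℝ) : ℝ :=
  ∑ x, ∑ y, QXY (x, y) * Real.log (QXY (x, y) / (P x * W x y))

/-- Number of messages `M_n = ⌈exp (n R)⌉`. -/
def Mn (R : ℝ) (n : ℕ) : ℕ := ⌈Real.exp (n * R)⌉₊

/-- All codebooks of `M` codewords, each of constant composition `P`. -/
def ccCodebooks {X : Type*} [Fintype X] (n M : ℕ) (P : X → ℝ) :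
    Finset (Fin M → Fin n → X) :=
  Finset.univ.filter fun C => ∀ m, C m ∈ typeClass n P

/-- Ensemble-average decoding error probability of an `(n,R,B)`-code for the IB channel:
the expectation, over a codebook drawn uniformly from the constant composition ensemble of
type `P`, of the average over messages `m` of the probability (under the memoryless channel
`W`) that the decoder output differs from `m` when codeword `C m` is sent. -/
def avgError {X Y L : Type*} [Fintype X] [Fintype Y] (W : X → Y → ℝ) (n M : ℕ)
    (P : X → ℝ) (φ : (Fin n → Y) → L) (ψ : L → (Fin M → Fin n → X) → Fin M) : ℝ :=
  (∑ C ∈ ccCodebooks n M P, (M : ℝ)⁻¹ * ∑ m : Fin M, ∑ y : Fin n → Y,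
      if ψ (φ y) C = m then 0 else ∏ t, W (C m t) (y t)) /
    ((ccCodebooks n M P).card : ℝ)

/-!
Transposing two positions after the prefix maps the sequences of `T_n(P)` with prefix `x^i` onto
themselves, so within this set every such position carries the symbol `a` equally often.
Counting the pairs `(x, j)` with `j > i` and `x_j = a` in two ways, each sequence contributes
exactly `n P(a) - i P̂_{x^i}(a)` of them; hence `P{X_{i+1} = a | x^i}` equals `Q*(a)` exactly,
and the bound on `Q*` is the bound on the conditional law.
-/

open Finset

section

variable {ι X : Type*}

lemma card_mul_card_filter_eq_sum_card_filter {S : Finset (ι → X)} {F : Finset ι} {j₀ : ι}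
    {a : X} (hF : ∀ j ∈ F, #{x ∈ S | x j = a} = #{x ∈ S | x j₀ = a}) :
    #F * #{x ∈ S | x j₀ = a} = ∑ x ∈ S, #{j ∈ F | x j = a} := by
  calc #F * #{x ∈ S | x j₀ = a} = ∑ j ∈ F, #{x ∈ S | x j = a} := by
        rw [sum_congr rfl hF, sum_const, smul_eq_mul]
    _ = ∑ x ∈ S, #{j ∈ F | x j = a} := by
        simp_rw [card_filter]; exact sum_comm

lemma card_filter_apply_eq_of_comp_swap_mem [DecidableEq ι] {S : Finset (ι → X)} {j j' : ι}
    (hS : ∀ x ∈ S, x ∘ Equiv.swap j j' ∈ S) (a : X) :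
    #{x ∈ S | x j = a} = #{x ∈ S | x j' = a} := by
  refine card_nbij' (· ∘ Equiv.swap j j') (· ∘ Equiv.swap j j') ?_ ?_ ?_ ?_ <;> intro x hx
  · simp_all
  · simp_all
  · ext; simp
  · ext; simp

lemma card_filter_eq_card_prefix_add_card_suffix {n i : ℕ} (hin : i < n) (x : Fin n → X)
    (a : X) :
    #{j | x j = a} = #{t : Fin i | x (Fin.castLE hin.le t) = a} +
      #{j ∈ Ici ⟨i, hin⟩ | x j = a} := by
  have hprefix : #{t : Fin i | x (Fin.castLE hin.le t) = a} = #{j ∈ Iio ⟨i, hin⟩ | x j = a} := by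
    rw [← card_map (Fin.castLEEmb hin.le)]
    congr 1
    ext j
    simp only [mem_map, mem_filter, mem_univ, true_and, Fin.coe_castLEEmb, mem_Iio]
    constructor
    · rintro ⟨t, ht, rfl⟩
      exact ⟨Fin.mk_lt_mk.mpr t.isLt, ht⟩
    · rintro ⟨hj, hja⟩
      exact ⟨⟨j, hj⟩, hja, rfl⟩
  rw [hprefix, ← card_union_of_disjoint]
  · congr 1; ext j; simp only [mem_filter, mem_union, mem_univ, true_and, mem_Iio, mem_Ici]; grind
  · exact disjoint_filter_filter
      (disjoint_left.mpr fun _ h h' => not_lt.mpr (mem_Ici.mp h') (mem_Iio.mp h))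

end

section

variable {X : Type*} [Fintype X]

def typeClassWithPrefix (n : ℕ) (P : X → ℝ) {i : ℕ} (h : i ≤ n) (xp : Fin i → X) :
    Finset (Fin n → X) :=
  {x ∈ typeClass n P | ∀ t : Fin i, x (Fin.castLE h t) = xp t}

lemma natCast_mul_empDist {n : ℕ} (x : Fin n → X) (a : X) :
    (n : ℝ) * empDist x a = #{t | x t = a} := by
  rcases Nat.eq_zero_or_pos n with rfl | hn
  · simp
  · rw [empDist]; field_simp

lemma empDist_comp_perm {n : ℕ} (x : Fin n → X) (σ : Equiv.Perm (Fin n)) :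
    empDist (x ∘ σ) = empDist x := by
  funext a
  rw [empDist, empDist, ← card_map σ.toEmbedding, map_filter]
  simp

lemma comp_swap_mem_typeClassWithPrefix {n i : ℕ} {P : X → ℝ} (h : i ≤ n) {xp : Fin i → X}
    {j j' : Fin n} (hj : i ≤ (j : ℕ)) (hj' : i ≤ (j' : ℕ)) {x : Fin n → X}
    (hx : x ∈ typeClassWithPrefix n P h xp) :
    x ∘ Equiv.swap j j' ∈ typeClassWithPrefix n P h xp := by
  simp only [typeClassWithPrefix, typeClass, mem_filter, mem_univ, true_and] at hx ⊢
  refine ⟨by rw [empDist_comp_perm, hx.1], fun t => ?_⟩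
  rw [Function.comp_apply, Equiv.swap_apply_of_ne_of_ne, hx.2 t] <;>
    exact Fin.ne_of_val_ne (by simp; omega)

lemma card_suffix_filter_of_mem_typeClassWithPrefix {n i : ℕ} (hin : i < n) {P : X → ℝ}
    {xp : Fin i → X} {x : Fin n → X} (hx : x ∈ typeClassWithPrefix n P hin.le xp) (a : X) :
    (#{j ∈ Ici ⟨i, hin⟩ | x j = a} : ℝ) = n * P a - i * empDist xp a := by
  simp only [typeClassWithPrefix, typeClass, mem_filter, mem_univ, true_and] at hx
  obtain ⟨hxP, hxp⟩ := hx
  rw [← hxP, natCast_mul_empDist, natCast_mul_empDist,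
    card_filter_eq_card_prefix_add_card_suffix hin]
  simp only [hxp]
  push_cast; ring

lemma sub_mul_card_filter_typeClassWithPrefix {n i : ℕ} (hin : i < n) (P : X → ℝ)
    (xp : Fin i → X) (a : X) :
    ((n - i : ℕ) : ℝ) * #{x ∈ typeClassWithPrefix n P hin.le xp | x ⟨i, hin⟩ = a} =
      #(typeClassWithPrefix n P hin.le xp) * (n * P a - i * empDist xp a) := by
  set S := typeClassWithPrefix n P hin.le xp
  have hsymm : ∀ j ∈ Ici ⟨i, hin⟩, #{x ∈ S | x j = a} = #{x ∈ S | x ⟨i, hin⟩ = a} :=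
    fun j hj => card_filter_apply_eq_of_comp_swap_mem
      (fun _ hx => comp_swap_mem_typeClassWithPrefix hin.le
        (Fin.le_iff_val_le_val.mp (mem_Ici.mp hj)) le_rfl hx) a
  have hcount := card_mul_card_filter_eq_sum_card_filter hsymm
  rw [Fin.card_Ici] at hcount
  calc ((n - i : ℕ) : ℝ) * #{x ∈ S | x ⟨i, hin⟩ = a}
      = ∑ x ∈ S, (#{j ∈ Ici ⟨i, hin⟩ | x j = a} : ℝ) := by exact_mod_cast hcount
    _ = ∑ x ∈ S, (n * P a - i * empDist xp a) :=
        sum_congr rfl fun _ hx => card_suffix_filter_of_mem_typeClassWithPrefix hin hx a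
    _ = #S * (n * P a - i * empDist xp a) := by rw [sum_const, nsmul_eq_mul]

lemma card_filter_div_card_typeClassWithPrefix {n i : ℕ} (hin : i < n) {P : X → ℝ}
    {xp : Fin i → X} (hS : (typeClassWithPrefix n P hin.le xp).Nonempty) (a : X) :
    (#{x ∈ typeClassWithPrefix n P hin.le xp | x ⟨i, hin⟩ = a} : ℝ) /
        #(typeClassWithPrefix n P hin.le xp) =
      (n * P a - i * empDist xp a) / (n - i : ℕ) := by
  have hni : ((n - i : ℕ) : ℝ) ≠ 0 := by exact_mod_cast (Nat.sub_pos_of_lt hin).ne'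
  rw [div_eq_div_iff (by exact_mod_cast hS.card_pos.ne') hni, mul_comm,
    sub_mul_card_filter_typeClassWithPrefix, mul_comm]

end

theorem constant_composition_almost_independent_general
    {X : Type*} [Fintype X] (n i : ℕ) (hin : i < n)
    (P : X → ℝ) (δ : ℝ) (xp : Fin i → X)
    (hpos : 0 < ((typeClass n P).filter fun x =>
        ∀ t : Fin i, x (Fin.castLE hin.le t) = xp t).card)
    (hQ : ∀ a : X,
      |((n : ℝ) * P a - (i : ℝ) * empDist xp a) / ((n - i : ℕ) : ℝ) - P a| ≤ δ * P a) :
    ∀ a : X,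
      |((((typeClass n P).filter fun x =>
            (∀ t : Fin i, x (Fin.castLE hin.le t) = xp t) ∧ x ⟨i, hin⟩ = a).card : ℝ) /
          (((typeClass n P).filter fun x =>
            ∀ t : Fin i, x (Fin.castLE hin.le t) = xp t).card : ℝ)) - P a| ≤ δ * P a := by
  intro a
  rw [← filter_filter]
  change |(#{x ∈ typeClassWithPrefix n P hin.le xp | x ⟨i, hin⟩ = a} : ℝ) /
      #(typeClassWithPrefix n P hin.le xp) - P a| ≤ δ * P a
  rw [card_filter_div_card_typeClassWithPrefix hin (card_pos.mp hpos)]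
  exact hQ a

/-- **Corollary 3** (almost independence): let `X^n` be uniform on `T_n(P)`, `1 ≤ i ≤ n−1`,
and let `x^i` be a prefix of positive probability with associated suffix type
`Q*(a) = (n·P(a) − i·P̂_{x^i}(a))/(n−i)`. If `|Q*(a) − P(a)| ≤ δ·P(a)` for all `a`, then the
conditional law of the next coordinate given the prefix satisfies
`|P{X_{i+1} = a | prefix} − P(a)| ≤ δ·P(a)` for all `a`. -/
theorem constant_composition_almost_independent
    {X : Type*} [Fintype X] (n i : ℕ) (hi1 : 1 ≤ i) (hin : i < n)
    (P : X → ℝ) (hP : IsNType n P) (δ : ℝ) (hδ : 0 ≤ δ) (xp : Fin i → X)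
    (hpos : 0 < ((typeClass n P).filter fun x =>
        ∀ t : Fin i, x (Fin.castLE hin.le t) = xp t).card)
    (hQ : ∀ a : X,
      |((n : ℝ) * P a - (i : ℝ) * empDist xp a) / ((n - i : ℕ) : ℝ) - P a| ≤ δ * P a) :
    ∀ a : X,
      |((((typeClass n P).filter fun x =>
            (∀ t : Fin i, x (Fin.castLE hin.le t) = xp t) ∧ x ⟨i, hin⟩ = a).card : ℝ) /
          (((typeClass n P).filter fun x =>
            ∀ t : Fin i, x (Fin.castLE hin.le t) = xp t).card : ℝ)) - P a| ≤ δ * P a :=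
  constant_composition_almost_independent_general n i hin P δ xp hpos hQ

end
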